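/- arXiv:1107.0424 — 4 statements merged into one kernel-verified Lean document; each statement's English description precedes it below -/
import Mathlib

section
/- (Weights Lemma.) Let s, d₁, …, dₙ ≥ 0 be real numbers and V₁, …, Vₙ vector subspaces of a common finite-dimensional vector space satisfying Σ_{i∈I} d_i + dim(Σ_{i∈I^c} V_i) ≥ s for every subset I ⊆ {1,…,n} (with the conventions Σ_{i∈∅} d_i = 0 and the dimension of the empty sum equal to 0). Fix a generating set {v^i_1, …, v^i_{m_i}} of V_i for each i. Let 𝕁 be the family of tuples J = (J₁, …, Jₙ) with J_i ⊆ {v^i_1, …, v^i_{m_i}} such that J₁ ∪ … ∪ Jₙ is a linearly independent system of cardinality at least s, and let 𝕁̄ = { (J, i) ∈ 𝕁 × {1,…,n} : Ĵ(i) ≥ 0 coordinatewise }, where Ĵ(i) := (#J₁, …, #Jₙ) + (s − (#J₁ + … + #Jₙ)) e_i ∈ ℝⁿ and e₁, …, eₙ is the canonical basis of ℝⁿ. Then there exist nonnegative real numbers (α_{(J,i)})_{(J,i)∈𝕁̄} with Σ_{(J,i)∈𝕁̄} α_{(J,i)} = 1 such that Σ_{(J,i)∈𝕁̄} α_{(J,i)}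 Ĵ(i) ≤ (d₁, …, dₙ) coordinatewise. -/
open Module Set

noncomputable section

variable {W : Type*} [AddCommGroup W] [Module ℝ W]

/-- `Ĵ(i) = (#J₁,…,#Jₙ) + (s − (#J₁+…+#Jₙ)) eᵢ ∈ ℝⁿ`. -/
def hatJ {n : ℕ} {m : Fin n → ℕ} (s : ℝ) (J : (i : Fin n) → Finset (Fin (m i)))
    (i : Fin n) : Fin n → ℝ :=
  fun j => ((J j).card : ℝ) + (if j = i then s - ∑ l, ((J l).card : ℝ) else 0)

/-- Membership in the family `𝕁`: the subfamilies `J i ⊆ {v i 1, …, v i (m i)}` are such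
that their union is a linearly independent system of cardinality at least `s`. -/
def memJfam {n : ℕ} {m : Fin n → ℕ} (s : ℝ) (v : (i : Fin n) → Fin (m i) → W)
    (J : (i : Fin n) → Finset (Fin (m i))) : Prop :=
  LinearIndependent ℝ (fun p : Σ i : Fin n, {j // j ∈ J i} => v p.1 p.2.1) ∧
    s ≤ ∑ i, ((J i).card : ℝ)

/-- Membership in the family `𝕁̄`: `(J, i) ∈ 𝕁` with `Ĵ(i) ≥ 0` coordinatewise. -/
def memJbar {n : ℕ} {m : Fin n → ℕ} (s : ℝ) (v : (i : Fin n) → Fin (m i) → W)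
    (p : ((i : Fin n) → Finset (Fin (m i))) × Fin n) : Prop :=
  memJfam s v p.1 ∧ ∀ j, 0 ≤ hatJ s p.1 p.2 j

end

/-!
By Hahn–Banach separation of the compact set of admissible convex combinations of the vectors
`Ĵ(i)` from the closed orthant `d - ℝⁿ₊`, it suffices to find, for every weight `w ≥ 0`, a pair
`(J, i) ∈ 𝕁̄` with `⟪w, Ĵ(i)⟫ ≤ ⟪w, d⟫`. List the indices as `σ 0, …, σ (n-1)` with `w`
increasing, and let `r k` be the dimension of the sum of the first `k` spaces `V (σ l)`. A greedy
choice of generators gives `J` whose first `k` blocks form a basis of that sum for every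
`k ≤ M + 1`, where `r M ≤ s ≤ r (M + 1)`; take `i = σ M`. On every tail `A` of the enumeration,
the mass of `Ĵ(i)` is either `s - r k ≤ ∑_{A} d` (the hypothesis for `I = A`) or nonpositive, and
Abel summation along the increasing weights turns these tail inequalities into the weighted one.
-/

open Finset Submodule

theorem sum_mul_nonneg_of_tail_sums_nonneg {n : ℕ} (u z : Fin n → ℝ) (hu : Monotone u)
    (hu0 : 0 ≤ u) (hz : ∀ K : ℕ, 0 ≤ ∑ k : Fin n with K ≤ k.val, z k) :
    0 ≤ ∑ k, u k * z k := by
  induction n with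
  | zero => simp
  | succ n ih =>
    have htail (K : ℕ) :
        ∑ k : Fin n with K ≤ k.val, z k.succ = ∑ k : Fin (n + 1) with K + 1 ≤ k.val, z k := by
      simp [sum_filter, Fin.sum_univ_succ]
    have hsplit : ∑ k, u k * z k = u 0 * ∑ k, z k + ∑ k : Fin n, (u k.succ - u 0) * z k.succ := by
      simp only [Fin.sum_univ_succ, sub_mul, sum_sub_distrib, ← mul_sum]
      ring
    rw [hsplit]
    refine add_nonneg (mul_nonneg (hu0 0) (by simpa using hz 0)) (ih _ _ ?_ ?_ fun K => ?_)
    · exact fun a b hab => sub_le_sub_right (hu (Fin.succ_le_succ_iff.2 hab)) _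
    · exact fun k => sub_nonneg.2 (hu (Fin.zero_le _))
    · exact htail K ▸ hz (K + 1)

section initialSegment

variable {ι : Type*} [Fintype ι] {n : ℕ} (σ : Fin n ≃ ι)

def initialSegment (K : ℕ) : Finset ι := {i | (σ.symm i : ℕ) < K}

@[simp]
theorem mem_initialSegment {K : ℕ} {i : ι} : i ∈ initialSegment σ K ↔ (σ.symm i : ℕ) < K := by
  simp [initialSegment]

theorem initialSegment_zero : initialSegment σ 0 = ∅ := by
  ext; simp

theorem initialSegment_of_le {K : ℕ} (hK : n ≤ K) : initialSegment σ K = Finset.univ := by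
  ext i; simpa using (σ.symm i).isLt.trans_le hK

theorem initialSegment_mono : Monotone (initialSegment σ) :=
  fun _ _ h _ => by simpa using fun hi => hi.trans_le h

theorem initialSegment_succ [DecidableEq ι] (k : Fin n) :
    initialSegment σ (k + 1) = insert (σ k) (initialSegment σ k) := by
  ext i
  rw [Finset.mem_insert, mem_initialSegment, mem_initialSegment, Nat.lt_succ_iff_lt_or_eq, or_comm,
    ← Fin.ext_iff, Equiv.symm_apply_eq]

theorem compl_initialSegment [DecidableEq ι] (K : ℕ) :
    (initialSegment σ K)ᶜ = ({k : Fin n | K ≤ k.val} : Finset (Fin n)).map σ.toEmbedding := by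
  ext i
  simp

theorem sum_mul_le_sum_mul_of_tail_sums_le [DecidableEq ι] (w x y : ι → ℝ)
    (hw : Monotone (w ∘ σ)) (hw0 : 0 ≤ w)
    (h : ∀ K, ∑ i ∈ (initialSegment σ K)ᶜ, x i ≤ ∑ i ∈ (initialSegment σ K)ᶜ, y i) :
    ∑ i, w i * x i ≤ ∑ i, w i * y i := by
  rw [← sub_nonneg, ← sum_sub_distrib, ← σ.sum_comp]
  simp_rw [← mul_sub]
  refine sum_mul_nonneg_of_tail_sums_nonneg _ _ hw (fun k => hw0 _) fun K => ?_
  simpa [compl_initialSegment, sum_map] using h K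

end initialSegment

theorem exists_lt_le_and_le_succ {α : Type*} [LinearOrder α] {f : ℕ → α} {s : α} {n : ℕ}
    (hn : 0 < n) (h0 : f 0 ≤ s) (hs : s ≤ f n) : ∃ M < n, f M ≤ s ∧ s ≤ f (M + 1) := by
  induction n, hn using Nat.le_induction with
  | base => exact ⟨0, one_pos, h0, hs⟩
  | succ n _ ih =>
    by_cases h : s ≤ f n
    · obtain ⟨M, hM, H⟩ := ih h
      exact ⟨M, hM.trans (lt_add_one n), H⟩
    · exact ⟨n, lt_add_one n, le_of_not_ge h, hs⟩

section LinearIndependent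

variable {K V : Type*} [DivisionRing K] [AddCommGroup V] [Module K V]

theorem exists_linearIndepOn_span_inter_eq {κ : Type*} (u : κ → V) {S : ℕ → Set κ}
    (hS : Monotone S) (N : ℕ) :
    ∃ B ⊆ S N, LinearIndepOn K u B ∧ ∀ k ≤ N, span K (u '' (B ∩ S k)) = span K (u '' S k) := by
  have extend {B₀ T : Set κ} (h : LinearIndepOn K u B₀) (hT : B₀ ⊆ T) :
      ∃ B ⊆ T, B₀ ⊆ B ∧ LinearIndepOn K u B ∧ span K (u '' B) = span K (u '' T) := by
    obtain ⟨B, hBT, hB₀, hspan, hB⟩ := exists_linearIndepOn_extension h hT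
    exact ⟨B, hBT, hB₀, hB, le_antisymm (span_mono (Set.image_mono hBT)) (span_le.2 hspan)⟩
  induction N with
  | zero =>
    obtain ⟨B, hBS, -, hB, hspan⟩ := extend (linearIndepOn_empty K u) (Set.empty_subset (S 0))
    refine ⟨B, hBS, hB, fun k hk => ?_⟩
    obtain rfl := Nat.le_zero.1 hk
    rwa [Set.inter_eq_left.2 hBS]
  | succ N ih =>
    obtain ⟨B₀, hB₀S, hB₀, hspan₀⟩ := ih
    obtain ⟨B, hBS, hB₀B, hB, hspan⟩ := extend hB₀ (hB₀S.trans (hS N.le_succ))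
    refine ⟨B, hBS, hB, fun k hk => ?_⟩
    rcases hk.lt_or_eq with hk | rfl
    · refine le_antisymm (span_mono (Set.image_mono Set.inter_subset_right)) ?_
      rw [← hspan₀ k (Nat.lt_succ_iff.1 hk)]
      exact span_mono (Set.image_mono (Set.inter_subset_inter_left _ hB₀B))
    · rwa [Set.inter_eq_left.2 hBS]

theorem finrank_span_image_finset_eq_card {κ : Type*} {u : κ → V} {s : Finset κ}
    (h : LinearIndepOn K u (s : Set κ)) : finrank K (span K (u '' s)) = #s := by
  rw [Set.image_eq_range, finrank_span_eq_card h]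
  simp

variable {ι : Type*} {κ : ι → Type*} (v : (i : ι) → κ i → V)

theorem span_image_sigma_fst_preimage (F : Finset ι) :
    span K ((fun q : Σ i, κ i => v q.1 q.2) '' (Sigma.fst ⁻¹' F)) =
      ⨆ i ∈ F, span K (Set.range (v i)) := by
  rw [← span_iUnion₂]
  congr 1
  ext x
  simp

theorem LinearIndepOn.linearIndependent_sigma [Fintype ι] {J : (i : ι) → Finset (κ i)}
    (h : LinearIndepOn K (fun q : Σ i, κ i => v q.1 q.2) (univ.sigma J : Set (Σ i, κ i))) :
    LinearIndependent K (fun p : Σ i, {j // j ∈ J i} => v p.1 p.2.1) :=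
  h.comp (fun p : Σ i, {j // j ∈ J i} => ⟨⟨p.1, p.2.1⟩, by simp⟩) <| by
    rintro ⟨i, j, hj⟩ ⟨i', j', hj'⟩ h
    simp only [Subtype.mk.injEq, Sigma.mk.injEq] at h
    obtain ⟨rfl, h⟩ := h
    obtain rfl := eq_of_heq h
    rfl

theorem exists_finsets_sum_card_eq_finrank [Fintype ι] [∀ i, Fintype (κ i)]
    {F : ℕ → Finset ι} (hF : Monotone F) (N : ℕ) :
    ∃ J : (i : ι) → Finset (κ i),
      LinearIndependent K (fun p : Σ i, {j // j ∈ J i} => v p.1 p.2.1) ∧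
      (∀ i ∉ F N, J i = ∅) ∧
      ∀ k ≤ N, ∑ i ∈ F k, #(J i) =
        finrank K (⨆ i ∈ F k, span K (Set.range (v i)) : Submodule K V) := by
  classical
  obtain ⟨B, hBS, hB, hBspan⟩ := exists_linearIndepOn_span_inter_eq (K := K)
    (fun q : Σ i, κ i => v q.1 q.2) (S := fun k => Sigma.fst ⁻¹' (F k))
    (fun _ _ h => Set.preimage_mono (coe_subset.2 (hF h))) N
  set J : (i : ι) → Finset (κ i) := fun i => {j | ⟨i, j⟩ ∈ B}
  have hBJ (G : Finset ι) : B ∩ Sigma.fst ⁻¹' G = G.sigma J := by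
    ext ⟨i, j⟩
    simp [J, and_comm]
  refine ⟨J, ?_, fun i hi => ?_, fun k hk => ?_⟩
  · refine LinearIndepOn.linearIndependent_sigma v ?_
    simpa [← hBJ univ] using hB
  · ext j
    simpa [J] using fun hj => hi (hBS hj)
  · rw [← span_image_sigma_fst_preimage, ← hBspan k hk, hBJ, ← card_sigma,
      finrank_span_image_finset_eq_card (hB.mono (hBJ _ ▸ Set.inter_subset_left))]

end LinearIndependent

theorem exists_convex_combination_le_of_forall_weighted_le {P ι : Type*} [Fintype P] [Fintype ι]
    (S : Set P) (f : P → ι → ℝ) (d : ι → ℝ)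
    (h : ∀ w : ι → ℝ, 0 ≤ w → ∃ p ∈ S, ∑ j, w j * f p j ≤ ∑ j, w j * d j) :
    ∃ α : P → ℝ, (∀ p, 0 ≤ α p) ∧ (∀ p ∉ S, α p = 0) ∧ ∑ p, α p = 1 ∧
      ∀ j, ∑ p, α p * f p j ≤ d j := by
  classical
  set A : Set (P → ℝ) := stdSimplex ℝ P ∩ {α | ∀ p ∉ S, α p = 0}
  let L : (P → ℝ) →ₗ[ℝ] ι → ℝ := ∑ p, (LinearMap.proj p).smulRight (f p)
  have hL : ∀ α j, L α j = ∑ p, α p * f p j := by simp [L]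
  suffices (L '' A ∩ Set.Iic d).Nonempty by
    obtain ⟨_, ⟨α, ⟨⟨hα0, hα1⟩, hαS⟩, rfl⟩, hle⟩ := this
    exact ⟨α, hα0, hαS, hα1, fun j => hL α j ▸ hle j⟩
  by_contra hdisj
  rw [Set.not_nonempty_iff_eq_empty, ← Set.disjoint_iff_inter_eq_empty] at hdisj
  have hAconv : Convex ℝ A := (convex_stdSimplex ℝ P).inter fun x hx y hy a b _ _ _ p hp => by
    simp [hx p hp, hy p hp]
  have hAcomp : IsCompact A := (isCompact_stdSimplex ℝ P).inter_right <| by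
    simp only [Set.ofPred_forall]
    exact isClosed_iInter fun p => isClosed_iInter fun _ =>
      isClosed_eq (continuous_apply p) continuous_const
  obtain ⟨g, a, b, hgA, hab, hgD⟩ := geometric_hahn_banach_compact_closed
    (hAconv.linear_image L) (hAcomp.image L.continuous_of_finiteDimensional)
    (convex_Iic d) isClosed_Iic hdisj
  have hg : ∀ y, g y = ∑ j, g (Pi.single j 1) * y j := by
    intro y
    refine (LinearMap.pi_apply_eq_sum_univ g.toLinearMap y).trans (sum_congr rfl fun j _ => ?_)
    have hj : (fun k => if j = k then (1 : ℝ) else 0) = Pi.single j 1 := by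
      funext k
      simp [Pi.single_apply, eq_comm]
    rw [hj, smul_eq_mul, mul_comm, ContinuousLinearMap.coe_coe]
  have hneg : ∀ j, g (Pi.single j 1) ≤ 0 := by
    intro j
    by_contra! hpos
    -- otherwise `g` is unbounded below on `Iic d`, along the ray `d - t • Pi.single j 1`
    have hbd : b < g d := hgD d (Set.mem_Iic.2 le_rfl)
    have ht : 0 ≤ (g d - b) / g (Pi.single j 1) := div_nonneg (by linarith) hpos.le
    have := hgD (d - ((g d - b) / g (Pi.single j 1)) • Pi.single j 1)
      (Set.mem_Iic.2 (sub_le_self _ (smul_nonneg ht (Pi.single_nonneg.2 zero_le_one))))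
    rw [map_sub, map_smul, smul_eq_mul, div_mul_cancel₀ _ hpos.ne'] at this
    linarith
  obtain ⟨p, hpS, hp⟩ := h (fun j => - g (Pi.single j 1)) (fun j => neg_nonneg.2 (hneg j))
  have hfp : f p ∈ L '' A :=
    ⟨Pi.single p 1, ⟨single_mem_stdSimplex ℝ p, fun q hq => Pi.single_eq_of_ne (by grind) _⟩,
      by ext; simp [hL, Pi.single_apply]⟩
  have h1 := hgA _ hfp
  have h2 := hgD d (Set.mem_Iic.2 le_rfl)
  simp only [neg_mul, sum_neg_distrib, neg_le_neg_iff] at hp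
  rw [hg] at h1 h2
  linarith

section Weights

variable {W : Type*} [AddCommGroup W] [Module ℝ W] {n : ℕ} {m : Fin n → ℕ}

theorem sum_hatJ (s : ℝ) (J : (i : Fin n) → Finset (Fin (m i))) (i₀ : Fin n) (A : Finset (Fin n)) :
    ∑ j ∈ A, hatJ s J i₀ j =
      ∑ j ∈ A, (#(J j) : ℝ) + if i₀ ∈ A then s - ∑ l, (#(J l) : ℝ) else 0 := by
  simp [hatJ, sum_add_distrib, sum_ite_eq']

noncomputable def prefixRank (V : Fin n → Submodule ℝ W) (σ : Equiv.Perm (Fin n)) (k : ℕ) : ℕ :=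
  finrank ℝ (⨆ i ∈ initialSegment σ k, V i : Submodule ℝ W)

theorem prefixRank_zero (V : Fin n → Submodule ℝ W) (σ : Equiv.Perm (Fin n)) :
    prefixRank V σ 0 = 0 := by
  have h0 : (⨆ i ∈ initialSegment σ 0, V i) = ⊥ := by simp [initialSegment_zero]
  rw [prefixRank, h0, finrank_bot]

def IsPrefixBasis (V : Fin n → Submodule ℝ W) (v : (i : Fin n) → Fin (m i) → W)
    (σ : Equiv.Perm (Fin n)) (N : ℕ) (J : (i : Fin n) → Finset (Fin (m i))) : Prop :=
  LinearIndependent ℝ (fun p : Σ i, {j // j ∈ J i} => v p.1 p.2.1) ∧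
    (∀ i ∉ initialSegment σ N, J i = ∅) ∧
    ∀ k ≤ N, ∑ i ∈ initialSegment σ k, #(J i) = prefixRank V σ k

variable {V : Fin n → Submodule ℝ W} {v : (i : Fin n) → Fin (m i) → W} {σ : Equiv.Perm (Fin n)}
  {J : (i : Fin n) → Finset (Fin (m i))}

theorem exists_isPrefixBasis (hv : ∀ i, span ℝ (Set.range (v i)) = V i) (σ : Equiv.Perm (Fin n))
    (N : ℕ) : ∃ J, IsPrefixBasis V v σ N J := by
  obtain ⟨J, hJli, hJ0, hJr⟩ :=
    exists_finsets_sum_card_eq_finrank (K := ℝ) v (initialSegment_mono σ) N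
  have hspan (G : Finset (Fin n)) : ⨆ i ∈ G, span ℝ (Set.range (v i)) = ⨆ i ∈ G, V i := by
    simp only [hv]
  exact ⟨J, hJli, hJ0, fun k hk => by rw [hJr k hk, hspan, prefixRank]⟩

theorem IsPrefixBasis.sum_card {N : ℕ} (hJ : IsPrefixBasis V v σ N J) :
    ∑ i, #(J i) = prefixRank V σ N := by
  rw [← hJ.2.2 N le_rfl]
  exact (sum_subset (subset_univ _) fun i _ hi => by simp [hJ.2.1 i hi]).symm

theorem IsPrefixBasis.card_add_prefixRank {M : Fin n} (hJ : IsPrefixBasis V v σ (M + 1) J) :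
    #(J (σ M)) + prefixRank V σ M = prefixRank V σ (M + 1) := by
  classical
  rw [← hJ.2.2 _ le_rfl, initialSegment_succ, sum_insert (by simp), hJ.2.2 M (Nat.le_succ _)]

theorem IsPrefixBasis.memJbar {s : ℝ} {M : Fin n} (hJ : IsPrefixBasis V v σ (M + 1) J)
    (hM : prefixRank V σ M ≤ s) (hM1 : s ≤ prefixRank V σ (M + 1)) : memJbar s v (J, σ M) := by
  have hT : ∑ i, (#(J i) : ℝ) = prefixRank V σ (M + 1) := by exact_mod_cast hJ.sum_card
  have hcard : (#(J (σ M)) : ℝ) + prefixRank V σ M = prefixRank V σ (M + 1) := by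
    exact_mod_cast hJ.card_add_prefixRank
  refine ⟨⟨hJ.1, hT ▸ hM1⟩, fun j => ?_⟩
  simp only [hatJ]
  split_ifs with hj
  · rw [hj, hT]
    linarith
  · simp

theorem IsPrefixBasis.sum_compl_hatJ_le {s : ℝ} {d : Fin n → ℝ} {M : Fin n}
    (hJ : IsPrefixBasis V v σ (M + 1) J) (hM1 : s ≤ prefixRank V σ (M + 1)) (hd : ∀ i, 0 ≤ d i)
    (hcond : ∀ I : Finset (Fin n),
      s ≤ ∑ i ∈ I, d i + (finrank ℝ (⨆ i ∈ Iᶜ, V i : Submodule ℝ W) : ℝ)) (k : ℕ) :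
    ∑ j ∈ (initialSegment σ k)ᶜ, hatJ s J (σ M) j ≤ ∑ j ∈ (initialSegment σ k)ᶜ, d j := by
  classical
  have hT : ∑ i, (#(J i) : ℝ) = prefixRank V σ (M + 1) := by exact_mod_cast hJ.sum_card
  rw [sum_hatJ, hT]
  by_cases hk : k ≤ M
  · have hJk : ∑ i ∈ initialSegment σ k, (#(J i) : ℝ) = prefixRank V σ k := by
      exact_mod_cast hJ.2.2 k (by omega)
    have hsplit := sum_compl_add_sum (initialSegment σ k) (fun i => (#(J i) : ℝ))
    have hk' := hcond (initialSegment σ k)ᶜ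
    rw [compl_compl] at hk'
    change s ≤ _ + (prefixRank V σ k : ℝ) at hk'
    rw [hT, hJk] at hsplit
    rw [if_pos (by simp [hk])]
    linarith
  · have : ∑ i ∈ (initialSegment σ k)ᶜ, (#(J i) : ℝ) = 0 := sum_eq_zero fun i hi => by
      rw [hJ.2.1 i fun h => Finset.mem_compl.1 hi (initialSegment_mono σ (by omega) h),
        Finset.card_empty, Nat.cast_zero]
    rw [this, zero_add]
    refine le_trans ?_ (sum_nonneg fun i _ => hd i)
    split_ifs <;> linarith

theorem exists_memJbar_sum_mul_hatJ_le (hn : 0 < n) {s : ℝ} (hs : 0 ≤ s) {d : Fin n → ℝ}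
    (hd : ∀ i, 0 ≤ d i)
    (hcond : ∀ I : Finset (Fin n),
      s ≤ ∑ i ∈ I, d i + (finrank ℝ (⨆ i ∈ Iᶜ, V i : Submodule ℝ W) : ℝ))
    (hv : ∀ i, span ℝ (Set.range (v i)) = V i) {w : Fin n → ℝ} (hw : 0 ≤ w) :
    ∃ p, memJbar s v p ∧ ∑ j, w j * hatJ s p.1 p.2 j ≤ ∑ j, w j * d j := by
  set σ := Tuple.sort w
  have hsn : s ≤ prefixRank V σ n := by
    have := hcond ∅
    rwa [Finset.compl_empty, ← initialSegment_of_le σ le_rfl, sum_empty, zero_add] at this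
  obtain ⟨M, hMn, hM, hM1⟩ := exists_lt_le_and_le_succ (f := fun k => (prefixRank V σ k : ℝ)) hn
    (by simpa [prefixRank_zero] using hs) hsn
  obtain ⟨J, hJ⟩ := exists_isPrefixBasis hv σ (M + 1)
  exact ⟨(J, σ ⟨M, hMn⟩), hJ.memJbar hM hM1, sum_mul_le_sum_mul_of_tail_sums_le σ w _ _
    (Tuple.monotone_sort w) hw (hJ.sum_compl_hatJ_le hM1 hd hcond)⟩

end Weights

theorem weights_lemma_general
    {W : Type*} [AddCommGroup W] [Module ℝ W]
    {n : ℕ} (hn : 0 < n) (m : Fin n → ℕ)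
    (s : ℝ) (hs : 0 ≤ s) (d : Fin n → ℝ) (hd : ∀ i, 0 ≤ d i)
    (V : Fin n → Submodule ℝ W)
    (hcond : ∀ I : Finset (Fin n),
      s ≤ ∑ i ∈ I, d i + (finrank ℝ (⨆ i ∈ Iᶜ, V i : Submodule ℝ W) : ℝ))
    (v : (i : Fin n) → Fin (m i) → W)
    (hv : ∀ i, Submodule.span ℝ (Set.range (v i)) = V i) :
    ∃ α : ((i : Fin n) → Finset (Fin (m i))) × Fin n → ℝ,
      (∀ p, 0 ≤ α p) ∧
      (∀ p, ¬ memJbar s v p → α p = 0) ∧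
      (∑ p, α p) = 1 ∧
      ∀ j, ∑ p, α p * hatJ s p.1 p.2 j ≤ d j :=
  exists_convex_combination_le_of_forall_weighted_le {p | memJbar s v p}
    (fun p => hatJ s p.1 p.2) d fun _ hw => exists_memJbar_sum_mul_hatJ_le hn hs hd hcond hv hw

theorem weights_lemma
    {W : Type*} [AddCommGroup W] [Module ℝ W] [FiniteDimensional ℝ W]
    {n : ℕ} (hn : 0 < n) (m : Fin n → ℕ)
    (s : ℝ) (hs : 0 ≤ s) (d : Fin n → ℝ) (hd : ∀ i, 0 ≤ d i)
    (V : Fin n → Submodule ℝ W)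
    (hcond : ∀ I : Finset (Fin n),
      s ≤ ∑ i ∈ I, d i + (finrank ℝ (⨆ i ∈ Iᶜ, V i : Submodule ℝ W) : ℝ))
    (v : (i : Fin n) → Fin (m i) → W)
    (hv : ∀ i, Submodule.span ℝ (Set.range (v i)) = V i) :
    ∃ α : ((i : Fin n) → Finset (Fin (m i))) × Fin n → ℝ,
      (∀ p, 0 ≤ α p) ∧
      (∀ p, ¬ memJbar s v p → α p = 0) ∧
      (∑ p, α p) = 1 ∧
      ∀ j, ∑ p, α p * hatJ s p.1 p.2 j ≤ d j :=
  weights_lemma_general hn m s hs d hd V hcond v hv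
end

section
/- Let s ≥ 0 be a real number, let V₁, …, Vₙ be vector subspaces of a common finite-dimensional vector space, and fix a generating set {v^i_1, …, v^i_{m_i}} of each V_i. Consider the polyhedron P = { (d₁,…,dₙ) ∈ ℝⁿ : d_i ≥ 0 for all i, and Σ_{i∈I} d_i + dim(Σ_{i∈I^c} V_i) ≥ s for every I ⊆ {1,…,n} }. Then every vertex (extreme point) of P has the form Ĵ(i) for some tuple J = (J₁, …, Jₙ) with J_i ⊆ {v^i_1, …, v^i_{m_i}}, J₁ ∪ … ∪ Jₙ linearly independent of cardinality at least s, and some i ∈ {1,…,n} with Ĵ(i) ≥ 0 coordinatewise, where Ĵ(i) := (#J₁, …, #Jₙ) + (s − (#J₁ + … + #Jₙ)) e_i and e₁, …, eₙ is the canonical basis of ℝⁿ. -/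
/-!
The right-hand side `f I = s - dim (∑_{i ∉ I} V i)` of the constraints is monotone and
supermodular, so the sets `I` whose constraint is tight at a vertex `x` are closed under `∪`
and `∩`, and `x` is determined by its tight constraints and its zero coordinates.
For `x j ≠ 0` let `M j` be the least tight set containing `j`; perturbing `x` along
`e j - e l` shows that `M` is injective on the support. Hence either `M j \ {j}` is tight, and
then `x j = dim (V j + V_{(M j)ᶜ}) - dim V_{(M j)ᶜ}` is an integer, or `M j` lies in every tight
set, which happens for at most one `j`. The whole index set is tight, so `∑ x = s`. Finally,
taking the coordinates in order of increasing `#(M j)`, the blocks already chosen lie in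
`V_{(M j)ᶜ}`, so one may add `⌈x j⌉` vectors of `V j` independent modulo `V_{(M j)ᶜ}`; this
gives `J` with `x = Ĵ(i)`.
-/

open Module Set

open Module Set Filter Topology Submodule

section LinearAlgebra

variable {K M : Type*} [DivisionRing K] [AddCommGroup M] [Module K M]

theorem exists_card_eq_linearIndepOn {κ : Type*} [Fintype κ] (g : κ → M) {c : ℕ}
    (hc : c ≤ finrank K (span K (range g))) :
    ∃ F : Finset κ, F.card = c ∧ LinearIndepOn K g (F : Set κ) := by
  classical
  obtain ⟨b, -, -, hspan, hb⟩ :=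
    exists_linearIndepOn_extension (linearIndepOn_empty K g) (empty_subset univ)
  have hrange : span K (range g) = span K (range fun i : b => g i) := by
    refine le_antisymm ?_ (span_mono (range_subset_iff.2 fun i => mem_range_self _))
    rw [span_le, ← image_univ, ← image_eq_range]
    exact hspan
  rw [hrange, finrank_span_eq_card hb, ← toFinset_card] at hc
  obtain ⟨F, hFb, hFc⟩ := Finset.exists_subset_card_eq hc
  exact ⟨F, hFc, hb.mono (by simpa using hFb)⟩

theorem finrank_map_mkQ_add_finrank [FiniteDimensional K M] (X Y : Submodule K M) :
    finrank K (Y.map X.mkQ) + finrank K X = finrank K ↥(X ⊔ Y) := by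
  have hrange : LinearMap.range (X.mkQ ∘ₗ (X ⊔ Y).subtype) = Y.map X.mkQ := by
    rw [LinearMap.range_comp, range_subtype, Submodule.map_sup, mkQ_map_self, bot_sup_eq]
  have hker : LinearMap.ker (X.mkQ ∘ₗ (X ⊔ Y).subtype) = X.comap (X ⊔ Y).subtype := by
    rw [LinearMap.ker_comp, ker_mkQ]
  have := LinearMap.finrank_range_add_finrank_ker (X.mkQ ∘ₗ (X ⊔ Y).subtype)
  rwa [hrange, hker, (comapSubtypeEquivOfLe le_sup_left).finrank_eq] at this

variable {ι : Type*} [DecidableEq ι] {κ : ι → Type*} [∀ i, Fintype (κ i)]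

/-- Greedy choice of independent subfamilies, processing the blocks by increasing `key`: the
blocks already chosen lie in `X j`, so block `j` only has to be independent modulo `X j`. -/
theorem exists_linearIndepOn_finset_sigma (v : (i : ι) → κ i → M) (X : ι → Submodule K M)
    (c key : ι → ℕ) (hc : ∀ j, c j ≤ finrank K (span K (range ((X j).mkQ ∘ v j))))
    (hX : ∀ j l, l ≠ j → c j ≠ 0 → c l ≠ 0 → key j ≤ key l → ∀ k, v l k ∈ X j)
    (S : Finset ι) :
    ∃ J : (i : ι) → Finset (κ i), (∀ i ∈ S, (J i).card = c i) ∧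
      LinearIndepOn K (fun p : Σ i, κ i => v p.1 p.2) (S.sigma J : Set (Σ i, κ i)) := by
  induction S using Finset.induction_on_min_value key with
  | empty => exact ⟨fun _ => ∅, by simp, by simp [linearIndepOn_empty]⟩
  | insert a S haS hmin ih =>
    obtain ⟨J, hJc, hJ⟩ := ih
    obtain ⟨F, hFc, hF⟩ := exists_card_eq_linearIndepOn (K := K) ((X a).mkQ ∘ v a) (hc a)
    refine ⟨Function.update J a F, fun i hi => ?_, ?_⟩
    · rcases eq_or_ne i a with rfl | hia
      · simpa using hFc
      · simpa [hia] using hJc i ((Finset.mem_insert.1 hi).resolve_left hia)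
    have hset : ((insert a S).sigma (Function.update J a F) : Set (Σ i, κ i)) =
        (S.sigma J : Set (Σ i, κ i)) ∪ Sigma.mk a '' F := by
      ext ⟨i, k⟩
      rcases eq_or_ne i a with rfl | hia
      · simp [haS]
      · simp [hia, hia.symm]
    rw [hset]
    refine hJ.union_of_quotient ?_
    rcases eq_or_ne (c a) 0 with hca | hca
    · simp [Finset.card_eq_zero.1 (hFc.trans hca), linearIndepOn_empty]
    have hle : span K ((fun p : Σ i, κ i => v p.1 p.2) '' (S.sigma J : Set _)) ≤ X a := by
      rw [span_le]
      rintro _ ⟨⟨l, k⟩, hlk, rfl⟩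
      obtain ⟨hlS, hkJ⟩ := Finset.mem_sigma.1 hlk
      refine hX a l (ne_of_mem_of_not_mem hlS haS) hca ?_ (hmin l hlS) k
      rw [← hJc l hlS]
      exact Finset.card_ne_zero_of_mem hkJ
    refine LinearIndepOn.of_comp (mapQ _ _ LinearMap.id hle) (LinearIndepOn.image_of_comp _ _ ?_)
    have hcomp : (mapQ _ _ LinearMap.id hle ∘ (span K _).mkQ ∘ fun p : Σ i, κ i => v p.1 p.2) ∘
        Sigma.mk a = (X a).mkQ ∘ v a := by
      ext k
      simp
    rwa [hcomp]

theorem exists_linearIndependent_sigma [Fintype ι] (v : (i : ι) → κ i → M)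
    (X : ι → Submodule K M) (c key : ι → ℕ)
    (hc : ∀ j, c j ≤ finrank K (span K (range ((X j).mkQ ∘ v j))))
    (hX : ∀ j l, l ≠ j → c j ≠ 0 → c l ≠ 0 → key j ≤ key l → ∀ k, v l k ∈ X j) :
    ∃ J : (i : ι) → Finset (κ i), (∀ i, (J i).card = c i) ∧
      LinearIndependent K (fun p : Σ i, {k // k ∈ J i} => v p.1 p.2.1) := by
  obtain ⟨J, hJc, hJ⟩ := exists_linearIndepOn_finset_sigma v X c key hc hX Finset.univ
  refine ⟨J, fun i => hJc i (Finset.mem_univ i), ?_⟩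
  refine hJ.comp (fun p : Σ i, {k // k ∈ J i} => ⟨⟨p.1, p.2.1⟩, by simp⟩) ?_
  rintro ⟨i, k, hk⟩ ⟨i', k', hk'⟩ hkk'
  obtain ⟨rfl, h⟩ := Sigma.mk.inj_iff.1 (Subtype.mk.inj hkk')
  cases eq_of_heq h
  rfl

end LinearAlgebra

theorem eq_zero_of_eventually_add_smul_mem {E : Type*} [AddCommGroup E] [Module ℝ E]
    {A : Set E} {x u : E} (hx : x ∈ A.extremePoints ℝ)
    (hu : ∀ᶠ t : ℝ in 𝓝 0, x + t • u ∈ A) : u = 0 := by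
  obtain ⟨ε, hε, hball⟩ := Metric.eventually_nhds_iff.1 hu
  have hmem : ∀ t, |t| < ε → x + t • u ∈ A := fun t ht => hball (by simpa using ht)
  have hseg : x ∈ openSegment ℝ (x + (ε / 2) • u) (x + (-(ε / 2)) • u) :=
    ⟨1 / 2, 1 / 2, by norm_num, by norm_num, by norm_num, by module⟩
  have hfix := hx.2 (hmem _ (by rw [abs_of_pos (by positivity)]; linarith))
    (hmem _ (by rw [abs_neg, abs_of_pos (by positivity)]; linarith)) hseg
  simpa [hε.ne'] using hfix

section CoverPolyhedron

variable {ι : Type*}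

def coverPolyhedron (f : Finset ι → ℝ) : Set (ι → ℝ) :=
  {d | (∀ i, 0 ≤ d i) ∧ ∀ I, f I ≤ ∑ i ∈ I, d i}

def IsTight (f : Finset ι → ℝ) (x : ι → ℝ) (I : Finset ι) : Prop :=
  ∑ i ∈ I, x i = f I

def IsSupermodular [DecidableEq ι] (f : Finset ι → ℝ) : Prop :=
  ∀ I J, f I + f J ≤ f (I ∪ J) + f (I ∩ J)

variable {f : Finset ι → ℝ} {x : ι → ℝ}

theorem eventually_add_smul_mem_coverPolyhedron [Finite ι] (hx : x ∈ coverPolyhedron f)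
    {u : ι → ℝ} (hu0 : ∀ j, x j = 0 → u j = 0) (huT : ∀ I, IsTight f x I → ∑ i ∈ I, u i = 0) :
    ∀ᶠ t : ℝ in 𝓝 0, x + t • u ∈ coverPolyhedron f := by
  have hlim (a b : ℝ) : Tendsto (fun t : ℝ => a + t * b) (𝓝 0) (𝓝 a) := by
    have hcont : Continuous fun t : ℝ => a + t * b := by fun_prop
    simpa using hcont.tendsto 0
  simp only [coverPolyhedron, mem_ofPred_eq, eventually_and, eventually_all, Pi.add_apply,
    Pi.smul_apply, smul_eq_mul, Finset.sum_add_distrib, ← Finset.mul_sum]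
  refine ⟨fun j => ?_, fun I => ?_⟩
  · rcases (hx.1 j).eq_or_lt with h | h
    · simp [← h, hu0 j h.symm]
    · exact ((hlim _ _).eventually_const_lt h).mono fun t ht => ht.le
  · rcases (hx.2 I).eq_or_lt with h | h
    · simp [huT I h.symm, h]
    · exact ((hlim _ _).eventually_const_lt h).mono fun t ht => ht.le

theorem eq_zero_of_forall_isTight [Finite ι] (hx : x ∈ (coverPolyhedron f).extremePoints ℝ)
    {u : ι → ℝ} (hu0 : ∀ j, x j = 0 → u j = 0)
    (huT : ∀ I, IsTight f x I → ∑ i ∈ I, u i = 0) : u = 0 :=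
  eq_zero_of_eventually_add_smul_mem hx (eventually_add_smul_mem_coverPolyhedron hx.1 hu0 huT)

theorem IsTight.union_inter [DecidableEq ι] (hx : x ∈ coverPolyhedron f) (hf : IsSupermodular f)
    {I J : Finset ι} (hI : IsTight f x I) (hJ : IsTight f x J) :
    IsTight f x (I ∪ J) ∧ IsTight f x (I ∩ J) := by
  have := hf I J
  have := hx.2 (I ∪ J)
  have := hx.2 (I ∩ J)
  have := Finset.sum_union_inter (s₁ := I) (s₂ := J) (f := x)
  unfold IsTight at *
  constructor <;> linarith

theorem exists_isTight_mem [Finite ι] [DecidableEq ι]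
    (hx : x ∈ (coverPolyhedron f).extremePoints ℝ) {j : ι} (hj : x j ≠ 0) :
    ∃ I, IsTight f x I ∧ j ∈ I := by
  by_contra! h
  have := eq_zero_of_forall_isTight hx (u := Pi.single j 1)
    (fun k hk => Pi.single_eq_of_ne (by rintro rfl; exact hj hk) _)
    (fun I hI => by simp [Finset.sum_pi_single', h I hI])
  simpa using congrFun this j

open Classical in
/-- The least tight set containing `j` (junk value `Finset.univ` if there is none). -/
noncomputable def minTight [Fintype ι] [DecidableEq ι] (f : Finset ι → ℝ) (x : ι → ℝ) (j : ι) :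
    Finset ι :=
  (Finset.univ.filter fun I => IsTight f x I ∧ j ∈ I).inf id

section MinTight

variable [Fintype ι] [DecidableEq ι]

theorem minTight_subset {I : Finset ι} {j : ι} (hI : IsTight f x I) (hj : j ∈ I) :
    minTight f x j ⊆ I :=
  Finset.inf_le (f := id) (by simp [hI, hj])

theorem isTight_minTight (hx : x ∈ (coverPolyhedron f).extremePoints ℝ) (hf : IsSupermodular f)
    {j : ι} (hj : x j ≠ 0) : IsTight f x (minTight f x j) ∧ j ∈ minTight f x j := by
  classical
  obtain ⟨I, hI, hjI⟩ := exists_isTight_mem hx hj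
  have hne : (Finset.univ.filter fun I => IsTight f x I ∧ j ∈ I).Nonempty :=
    ⟨I, by simp [hI, hjI]⟩
  rw [minTight, ← Finset.inf'_eq_inf hne]
  refine Finset.inf'_induction (p := fun A => IsTight f x A ∧ j ∈ A) hne id
    (fun A hA B hB => ?_) (fun T hT => by simpa using hT)
  exact ⟨(hA.1.union_inter hx.1 hf hB.1).2, Finset.mem_inter.2 ⟨hA.2, hB.2⟩⟩

theorem eq_of_minTight_eq (hx : x ∈ (coverPolyhedron f).extremePoints ℝ) (hf : IsSupermodular f)
    {j l : ι} (hj : x j ≠ 0) (hl : x l ≠ 0) (h : minTight f x j = minTight f x l) : j = l := by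
  by_contra hne
  have hiff : ∀ I, IsTight f x I → (j ∈ I ↔ l ∈ I) := fun I hI =>
    ⟨fun hjI => minTight_subset hI hjI (h ▸ (isTight_minTight hx hf hl).2),
      fun hlI => minTight_subset hI hlI (h ▸ (isTight_minTight hx hf hj).2)⟩
  have := eq_zero_of_forall_isTight hx (u := Pi.single j 1 - Pi.single l 1)
    (fun k hk => by
      have hkj : k ≠ j := by rintro rfl; exact hj hk
      have hkl : k ≠ l := by rintro rfl; exact hl hk
      simp [hkj, hkl])
    (fun I hI => by
      simp only [Pi.sub_apply, Finset.sum_sub_distrib, Finset.sum_pi_single', hiff I hI,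
        sub_self])
  simpa [hne] using congrFun this j

theorem minTight_ssubset (hx : x ∈ (coverPolyhedron f).extremePoints ℝ) (hf : IsSupermodular f)
    {j l : ι} (hj : x j ≠ 0) (hl : x l ≠ 0) (hlj : l ≠ j) (hmem : l ∈ minTight f x j) :
    minTight f x l ⊂ minTight f x j :=
  (minTight_subset (isTight_minTight hx hf hj).1 hmem).ssubset_of_ne
    fun h => hlj (eq_of_minTight_eq hx hf hl hj h)

theorem minTight_subset_erase (hx : x ∈ (coverPolyhedron f).extremePoints ℝ)
    (hf : IsSupermodular f) {j l : ι} (hj : x j ≠ 0) (hl : x l ≠ 0)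
    (hmem : l ∈ (minTight f x j).erase j) : minTight f x l ⊆ (minTight f x j).erase j := by
  have hlt := minTight_ssubset hx hf hj hl (Finset.ne_of_mem_erase hmem)
    (Finset.mem_of_mem_erase hmem)
  refine Finset.subset_erase.2 ⟨hlt.subset, fun hjl => hlt.not_subset ?_⟩
  exact minTight_subset (isTight_minTight hx hf hl).1 hjl

theorem apply_le_sub_erase (hx : x ∈ (coverPolyhedron f).extremePoints ℝ) (hf : IsSupermodular f)
    {j : ι} (hj : x j ≠ 0) :
    x j ≤ f (minTight f x j) - f ((minTight f x j).erase j) := by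
  obtain ⟨hT, hjM⟩ := isTight_minTight hx hf hj
  have := hx.1.2 ((minTight f x j).erase j)
  rw [IsTight, ← Finset.add_sum_erase _ _ hjM] at hT
  linarith

theorem apply_eq_sub_erase (hx : x ∈ (coverPolyhedron f).extremePoints ℝ) (hf : IsSupermodular f)
    {j : ι} (hj : x j ≠ 0) (hT : IsTight f x ((minTight f x j).erase j)) :
    x j = f (minTight f x j) - f ((minTight f x j).erase j) := by
  obtain ⟨hM, hjM⟩ := isTight_minTight hx hf hj
  rw [IsTight, ← Finset.add_sum_erase _ _ hjM] at hM
  rw [IsTight] at hT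
  linarith

/-- The union of the tight subsets of `A` is tight and carries all the mass of `x` on `A`. -/
theorem isTight_of_forall_mem_support (hx : x ∈ coverPolyhedron f) (hmono : Monotone f)
    (hf : IsSupermodular f) {A : Finset ι} (hA : ∃ T ⊆ A, IsTight f x T)
    (hsupp : ∀ l ∈ A, x l ≠ 0 → ∃ T ⊆ A, IsTight f x T ∧ l ∈ T) : IsTight f x A := by
  classical
  set 𝒯 := Finset.univ.filter fun T => T ⊆ A ∧ IsTight f x T
  have hne : 𝒯.Nonempty := by
    obtain ⟨T, hTA, hT⟩ := hA
    exact ⟨T, by simp [𝒯, hTA, hT]⟩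
  have hN : IsTight f x (𝒯.sup' hne id) :=
    Finset.sup'_induction hne id (fun _ h₁ _ h₂ => (h₁.union_inter hx hf h₂).1)
      (fun T hT => (Finset.mem_filter.1 hT).2.2)
  have hNA : 𝒯.sup' hne id ⊆ A := Finset.sup'_le hne id fun T hT => (Finset.mem_filter.1 hT).2.1
  have hsum : ∑ i ∈ 𝒯.sup' hne id, x i = ∑ i ∈ A, x i := by
    refine Finset.sum_subset hNA fun l hlA hlN => ?_
    by_contra hl
    obtain ⟨T, hTA, hT, hlT⟩ := hsupp l hlA hl
    have hT𝒯 : T ∈ 𝒯 := by simp [𝒯, hTA, hT]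
    exact hlN ((Finset.le_sup' id hT𝒯 : T ⊆ _) hlT)
  have := hmono hNA
  have := hx.2 A
  rw [IsTight] at hN ⊢
  linarith

theorem isTight_univ (hx : x ∈ (coverPolyhedron f).extremePoints ℝ) (hmono : Monotone f)
    (hf : IsSupermodular f) (hf0 : 0 ≤ f Finset.univ) : IsTight f x Finset.univ := by
  by_cases hsupp : ∃ j, x j ≠ 0
  · obtain ⟨j, hj⟩ := hsupp
    refine isTight_of_forall_mem_support hx.1 hmono hf ?_ fun l _ hl => ?_
    · obtain ⟨T, hT, -⟩ := exists_isTight_mem hx hj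
      exact ⟨T, Finset.subset_univ T, hT⟩
    · obtain ⟨T, hT, hlT⟩ := exists_isTight_mem hx hl
      exact ⟨T, Finset.subset_univ T, hT, hlT⟩
  · push Not at hsupp
    have := hx.1.2 Finset.univ
    simp only [IsTight, hsupp, Finset.sum_const_zero] at this ⊢
    linarith

theorem isTight_erase_or_minTight_subset (hx : x ∈ (coverPolyhedron f).extremePoints ℝ)
    (hmono : Monotone f) (hf : IsSupermodular f) {j : ι} (hj : x j ≠ 0) :
    IsTight f x ((minTight f x j).erase j) ∨ ∀ T, IsTight f x T → minTight f x j ⊆ T := by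
  refine or_iff_not_imp_right.2 fun h => ?_
  push Not at h
  obtain ⟨T, hT, hMT⟩ := h
  obtain ⟨hM, hjM⟩ := isTight_minTight hx hf hj
  have hjT : j ∉ T := fun hjT => hMT (minTight_subset hT hjT)
  refine isTight_of_forall_mem_support hx.1 hmono hf
    ⟨T ∩ minTight f x j, ?_, (hT.union_inter hx.1 hf hM).2⟩ fun l hl hxl => ?_
  · exact Finset.subset_erase.2
      ⟨Finset.inter_subset_right, fun h => hjT (Finset.mem_inter.1 h).1⟩
  · exact ⟨minTight f x l, minTight_subset_erase hx hf hj hxl hl, isTight_minTight hx hf hxl⟩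

theorem exists_forall_ne_apply_eq_sub_erase [Nonempty ι]
    (hx : x ∈ (coverPolyhedron f).extremePoints ℝ) (hmono : Monotone f) (hf : IsSupermodular f) :
    ∃ i, ∀ j ≠ i, x j ≠ 0 → x j = f (minTight f x j) - f ((minTight f x j).erase j) := by
  by_cases h : ∃ i, x i ≠ 0 ∧ ∀ T, IsTight f x T → minTight f x i ⊆ T
  · obtain ⟨i, hi, hiT⟩ := h
    refine ⟨i, fun j hji hj => apply_eq_sub_erase hx hf hj ?_⟩
    refine (isTight_erase_or_minTight_subset hx hmono hf hj).resolve_right fun hjT => hji ?_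
    exact eq_of_minTight_eq hx hf hj hi <| Finset.Subset.antisymm
      (hjT _ (isTight_minTight hx hf hi).1) (hiT _ (isTight_minTight hx hf hj).1)
  · push Not at h
    refine ⟨Classical.arbitrary ι, fun j _ hj => apply_eq_sub_erase hx hf hj ?_⟩
    refine (isTight_erase_or_minTight_subset hx hmono hf hj).resolve_right fun hjT => ?_
    obtain ⟨T, hT, hMT⟩ := h j hj
    exact hMT (hjT T hT)

end MinTight

end CoverPolyhedron

section Demand

variable {W : Type*} [AddCommGroup W] [Module ℝ W]
  {ι : Type*} [Fintype ι] [DecidableEq ι] (V : ι → Submodule ℝ W) (s : ℝ)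

theorem finrank_biSup_union_add_finrank_biSup_inter_le [FiniteDimensional ℝ W] (A B : Finset ι) :
    finrank ℝ ↥(⨆ i ∈ A ∪ B, V i) + finrank ℝ ↥(⨆ i ∈ A ∩ B, V i) ≤
      finrank ℝ ↥(⨆ i ∈ A, V i) + finrank ℝ ↥(⨆ i ∈ B, V i) := by
  have hinter : (⨆ i ∈ A ∩ B, V i) ≤ (⨆ i ∈ A, V i) ⊓ ⨆ i ∈ B, V i :=
    le_inf (biSup_mono fun _ h => (Finset.mem_inter.1 h).1)
      (biSup_mono fun _ h => (Finset.mem_inter.1 h).2)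
  have := Submodule.finrank_mono hinter
  have := finrank_sup_add_finrank_inf_eq (⨆ i ∈ A, V i) (⨆ i ∈ B, V i)
  rw [Finset.iSup_union]
  omega

noncomputable def demand (I : Finset ι) : ℝ :=
  s - finrank ℝ ↥(⨆ i ∈ Iᶜ, V i)

@[simp]
theorem demand_univ : demand V s Finset.univ = s := by
  have : (⨆ i ∈ (Finset.univ : Finset ι)ᶜ, V i) = ⊥ := by simp
  rw [demand, this, finrank_bot, Nat.cast_zero, sub_zero]

theorem monotone_demand [FiniteDimensional ℝ W] : Monotone (demand V s) := fun I J hIJ => by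
  have : (⨆ i ∈ Jᶜ, V i) ≤ ⨆ i ∈ Iᶜ, V i :=
    biSup_mono fun _ h => Finset.mem_compl.2 fun hi => Finset.mem_compl.1 h (hIJ hi)
  have := Submodule.finrank_mono this
  simp only [demand]
  gcongr

theorem isSupermodular_demand [FiniteDimensional ℝ W] : IsSupermodular (demand V s) := fun I J => by
  have h := finrank_biSup_union_add_finrank_biSup_inter_le V Iᶜ Jᶜ
  rw [← Finset.compl_inter, ← Finset.compl_union] at h
  have h' : (finrank ℝ ↥(⨆ i ∈ (I ∩ J)ᶜ, V i) : ℝ) + finrank ℝ ↥(⨆ i ∈ (I ∪ J)ᶜ, V i) ≤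
      finrank ℝ ↥(⨆ i ∈ Iᶜ, V i) + finrank ℝ ↥(⨆ i ∈ Jᶜ, V i) := by exact_mod_cast h
  simp only [demand]
  linarith

theorem demand_sub_demand_erase [FiniteDimensional ℝ W] (M : Finset ι) (j : ι) :
    demand V s M - demand V s (M.erase j) =
      finrank ℝ ↥((V j).map (⨆ i ∈ Mᶜ, V i).mkQ) := by
  have h := finrank_map_mkQ_add_finrank (⨆ i ∈ Mᶜ, V i) (V j)
  rw [sup_comm, ← Finset.iSup_insert, ← Finset.compl_erase] at h
  have h' : (finrank ℝ ↥((V j).map (⨆ i ∈ Mᶜ, V i).mkQ) : ℝ) + finrank ℝ ↥(⨆ i ∈ Mᶜ, V i) =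
      finrank ℝ ↥(⨆ i ∈ (M.erase j)ᶜ, V i) := by exact_mod_cast h
  simp only [demand]
  linarith

theorem coverPolyhedron_demand :
    coverPolyhedron (demand V s) =
      {d | (∀ i, 0 ≤ d i) ∧ ∀ I : Finset ι, s ≤ ∑ i ∈ I, d i + finrank ℝ ↥(⨆ i ∈ Iᶜ, V i)} := by
  ext d
  simp [coverPolyhedron, demand]

theorem exists_linearIndependent_card_eq_ceil [FiniteDimensional ℝ W] {m : ι → ℕ}
    (v : (i : ι) → Fin (m i) → W) (hv : ∀ i, span ℝ (range (v i)) = V i) {x : ι → ℝ}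
    (hx : x ∈ (coverPolyhedron (demand V s)).extremePoints ℝ) :
    ∃ J : (i : ι) → Finset (Fin (m i)), (∀ i, (J i).card = ⌈x i⌉₊) ∧
      LinearIndependent ℝ (fun p : Σ i, {k // k ∈ J i} => v p.1 p.2.1) := by
  have hsup := isSupermodular_demand V s
  set M := minTight (demand V s) x
  have hpos {j} (hj : ⌈x j⌉₊ ≠ 0) : x j ≠ 0 := by
    rintro h; simp [h] at hj
  refine exists_linearIndependent_sigma v (fun j => ⨆ l ∈ (M j)ᶜ, V l) (fun j => ⌈x j⌉₊)
    (fun j => (M j).card) (fun j => ?_) fun j l hlj hj hl hcard k => ?_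
  · rw [range_comp, ← Submodule.map_span, hv]
    rcases eq_or_ne ⌈x j⌉₊ 0 with h | h
    · simp [h]
    refine Nat.ceil_le.2 ?_
    rw [← demand_sub_demand_erase V s]
    exact apply_le_sub_erase hx hsup (hpos h)
  · have hlM : l ∉ M j := fun hlM => (Finset.card_lt_card
      (minTight_ssubset hx hsup (hpos hj) (hpos hl) hlj hlM)).not_ge hcard
    refine le_biSup V (Finset.mem_compl.2 hlM) ?_
    rw [← hv l]
    exact subset_span (mem_range_self k)

end Demand

theorem hatJ_eq_of_forall_ne {n : ℕ} {m : Fin n → ℕ} {s : ℝ} {x : Fin n → ℝ}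
    {J : (i : Fin n) → Finset (Fin (m i))} {i : Fin n} (hsum : ∑ l, x l = s)
    (hJ : ∀ j ≠ i, ((J j).card : ℝ) = x j) : hatJ s J i = x := by
  funext j
  rcases eq_or_ne j i with rfl | hji
  · have hsplit := Finset.add_sum_erase Finset.univ (fun l => ((J l).card : ℝ)) (Finset.mem_univ j)
    have hsplit' := Finset.add_sum_erase Finset.univ x (Finset.mem_univ j)
    rw [Finset.sum_congr rfl fun l hl => hJ l (Finset.ne_of_mem_erase hl)] at hsplit
    simp only [hatJ, ↓reduceIte]
    linarith
  · simp [hatJ, hji, hJ j hji]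

theorem vertices_of_polyhedron_are_hatJ
    {W : Type*} [AddCommGroup W] [Module ℝ W] [FiniteDimensional ℝ W]
    {n : ℕ} (hn : 0 < n) (m : Fin n → ℕ)
    (s : ℝ) (hs : 0 ≤ s)
    (V : Fin n → Submodule ℝ W)
    (v : (i : Fin n) → Fin (m i) → W)
    (hv : ∀ i, Submodule.span ℝ (Set.range (v i)) = V i) :
    ∀ x ∈ Set.extremePoints ℝ
      { d : Fin n → ℝ | (∀ i, 0 ≤ d i) ∧
        ∀ I : Finset (Fin n),
          s ≤ ∑ i ∈ I, d i + (finrank ℝ (⨆ i ∈ Iᶜ, V i : Submodule ℝ W) : ℝ) },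
      ∃ p : ((i : Fin n) → Finset (Fin (m i))) × Fin n,
        memJbar s v p ∧ x = hatJ s p.1 p.2 := by
  intro x hx
  rw [← coverPolyhedron_demand] at hx
  have : Nonempty (Fin n) := ⟨⟨0, hn⟩⟩
  have hmono := monotone_demand V s
  have hsup := isSupermodular_demand V s
  have hsum : ∑ l, x l = s := by
    simpa [IsTight] using isTight_univ hx hmono hsup (by simpa using hs)
  obtain ⟨i, hi⟩ := exists_forall_ne_apply_eq_sub_erase hx hmono hsup
  obtain ⟨J, hJc, hJ⟩ := exists_linearIndependent_card_eq_ceil V s v hv hx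
  have hint : ∀ j ≠ i, ((J j).card : ℝ) = x j := fun j hji => by
    rw [hJc]
    rcases eq_or_ne (x j) 0 with h | h
    · simp [h]
    · rw [hi j hji h, demand_sub_demand_erase, Nat.ceil_natCast]
  have hxJ := hatJ_eq_of_forall_ne hsum hint
  refine ⟨(J, i), ⟨⟨hJ, ?_⟩, fun j => hxJ ▸ hx.1.1 j⟩, hxJ.symm⟩
  calc s = ∑ l, x l := hsum.symm
    _ ≤ ∑ l, ((J l).card : ℝ) := Finset.sum_le_sum fun l _ => hJc l ▸ Nat.le_ceil (x l)
end

section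
/- Let k and k' be integers with 1 ≤ k' ≤ k and let 𝔪 be a real number with k' − 1 < 𝔪 < k'. Then there exists a constant c > 0 depending only on 𝔪, k and k' such that for every real z > 0: ∫_{ℝ^{k'}} ∫_{ℝ^{k−k'}} ( |η'₁|/z + |η''| )^{𝔪−k} e^{−|η'|²/2} dη'' dη' ≤ c · z^{k'−𝔪}, where η'₁ denotes the first coordinate of η' ∈ ℝ^{k'}, |·| is the Euclidean norm, and for k' = k the inner integral over ℝ⁰ is interpreted as evaluation (so the bound reads ∫_{ℝ^{k}} (|η'₁|/z)^{𝔪−k} e^{−|η'|²/2} dη' ≤ c z^{k−𝔪}). -/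
/-!
Substituting `η'' = (|η'₁| / z) • ζ` turns the inner integral into
`(|η'₁| / z) ^ (𝔪 - k') * ∫ (1 + ‖ζ‖) ^ (𝔪 - k) dζ`, which is finite because `𝔪 < k'`.
What remains is `z ^ (k' - 𝔪)` times the Gaussian moment `∫ |η'₁| ^ (𝔪 - k') e^{-‖η'‖²/2} dη'`,
finite because `𝔪 - k' > -1`. The hyperplane `η'₁ = 0`, where the substitution degenerates, is null.
-/

open MeasureTheory Set Module
open scoped ENNReal

theorem integrable_abs_rpow_mul_exp_neg_mul_sq {b : ℝ} (hb : 0 < b) {s : ℝ} (hs : -1 < s) :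
    Integrable fun x : ℝ => |x| ^ s * Real.exp (-b * x ^ 2) := by
  have hIoi : IntegrableOn (fun x : ℝ => |x| ^ s * Real.exp (-b * x ^ 2)) (Ioi 0) :=
    (integrableOn_rpow_mul_exp_neg_mul_sq hb hs).congr_fun
      (fun x hx => by rw [abs_of_pos (mem_Ioi.mp hx)]) measurableSet_Ioi
  rw [← integrableOn_univ, ← Iio_union_Ici (a := (0 : ℝ)), integrableOn_union,
    integrableOn_Ici_iff_integrableOn_Ioi]
  refine ⟨?_, hIoi⟩
  rw [← (Measure.measurePreserving_neg (volume : Measure ℝ)).integrableOn_comp_preimage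
    (Homeomorph.neg ℝ).measurableEmbedding]
  simpa [Function.comp_def] using hIoi

theorem EuclideanSpace.integrable_abs_apply_rpow_mul_exp_neg_mul_norm_sq {ι : Type*} [Fintype ι]
    (i : ι) {b : ℝ} (hb : 0 < b) {s : ℝ} (hs : -1 < s) :
    Integrable fun x : EuclideanSpace ℝ ι => |x i| ^ s * Real.exp (-b * ‖x‖ ^ 2) := by
  classical
  rw [← (PiLp.volume_preserving_toLp ι).integrable_comp_emb
    (MeasurableEquiv.toLp 2 (ι → ℝ)).measurableEmbedding]
  have hfactor (j : ι) :
      Integrable fun t : ℝ => (if j = i then |t| ^ s else 1) * Real.exp (-b * t ^ 2) := by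
    split_ifs
    · exact integrable_abs_rpow_mul_exp_neg_mul_sq hb hs
    · simpa using integrable_exp_neg_mul_sq hb
  refine (Integrable.fintype_prod hfactor).congr (Filter.Eventually.of_forall fun y => ?_)
  simp only [Function.comp_apply, Finset.prod_mul_distrib, Finset.prod_ite_eq', Finset.mem_univ,
    if_true, EuclideanSpace.norm_sq_eq, sq_abs, Finset.mul_sum, Real.exp_sum, Real.norm_eq_abs]

theorem EuclideanSpace.ae_apply_ne {ι : Type*} [Fintype ι] (i : ι) (c : ℝ) :
    ∀ᵐ x : EuclideanSpace ℝ ι, x i ≠ c :=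
  (PiLp.volume_preserving_ofLp ι).quasiMeasurePreserving.ae (Measure.ae_eval_ne _ i c)

section AddHaar

variable {E : Type*} [NormedAddCommGroup E] [NormedSpace ℝ E] [FiniteDimensional ℝ E]
  [MeasurableSpace E] [BorelSpace E] (μ : Measure E) [μ.IsAddHaarMeasure]

theorem lintegral_comp_smul_of_pos {f : E → ℝ≥0∞} (hf : Measurable f) {r : ℝ} (hr : 0 < r) :
    ∫⁻ x, f (r • x) ∂μ = ENNReal.ofReal (r ^ finrank ℝ E)⁻¹ * ∫⁻ x, f x ∂μ := by
  rw [← lintegral_map hf (measurable_const_smul r), Measure.map_addHaar_smul μ hr.ne',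
    lintegral_smul_measure, abs_of_pos (by positivity), smul_eq_mul]

theorem lintegral_ofReal_add_norm_rpow {a : ℝ} (ha : 0 < a) (q : ℝ) :
    ∫⁻ x, ENNReal.ofReal (a + ‖x‖) ^ q ∂μ
      = ENNReal.ofReal a ^ (q + finrank ℝ E) * ∫⁻ x, ENNReal.ofReal (1 + ‖x‖) ^ q ∂μ := by
  have ha' : ENNReal.ofReal a ≠ 0 := by simpa using ha
  have hscale (x : E) :
      ENNReal.ofReal (a + ‖a • x‖) ^ q = ENNReal.ofReal a ^ q * ENNReal.ofReal (1 + ‖x‖) ^ q := by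
    rw [norm_smul, Real.norm_of_nonneg ha.le, show a + a * ‖x‖ = a * (1 + ‖x‖) by ring,
      ENNReal.ofReal_mul ha.le,
      ENNReal.mul_rpow_of_ne_zero ha' (ENNReal.ofReal_pos.2 (by positivity)).ne']
  have h := lintegral_comp_smul_of_pos μ (f := fun x => ENNReal.ofReal (a + ‖x‖) ^ q)
    (by fun_prop) ha
  simp only [hscale] at h
  rw [lintegral_const_mul' _ _ (ENNReal.rpow_ne_top_of_ne_zero ha' ENNReal.ofReal_ne_top)] at h
  rw [ENNReal.rpow_add _ _ ha' ENNReal.ofReal_ne_top, ENNReal.rpow_natCast,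
    ← ENNReal.ofReal_pow ha.le, mul_comm (ENNReal.ofReal a ^ q), mul_assoc, h, ← mul_assoc,
    ← ENNReal.ofReal_mul (by positivity), mul_inv_cancel₀ (by positivity), ENNReal.ofReal_one,
    one_mul]

theorem lintegral_lintegral_ofReal_abs_div_add_norm_rpow_mul {ι : Type*} [Fintype ι] (i : ι)
    {w : EuclideanSpace ℝ ι → ℝ≥0∞} (hw : Measurable w) {z : ℝ} (hz : 0 < z) (q : ℝ) :
    ∫⁻ x : EuclideanSpace ℝ ι, ∫⁻ y, ENNReal.ofReal (|x i| / z + ‖y‖) ^ q * w x ∂μ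
      = ENNReal.ofReal (z ^ (-(q + finrank ℝ E))) * (∫⁻ y, ENNReal.ofReal (1 + ‖y‖) ^ q ∂μ) *
          ∫⁻ x, ENNReal.ofReal (|x i| ^ (q + finrank ℝ E)) * w x := by
  have hinner (x : EuclideanSpace ℝ ι) (hx : x i ≠ 0) :
      ∫⁻ y, ENNReal.ofReal (|x i| / z + ‖y‖) ^ q * w x ∂μ
        = ENNReal.ofReal (z ^ (-(q + finrank ℝ E))) * (∫⁻ y, ENNReal.ofReal (1 + ‖y‖) ^ q ∂μ) *
            (ENNReal.ofReal (|x i| ^ (q + finrank ℝ E)) * w x) := by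
    have hsplit : (|x i| / z) ^ (q + finrank ℝ E)
        = z ^ (-(q + finrank ℝ E)) * |x i| ^ (q + finrank ℝ E) := by
      rw [Real.div_rpow (abs_nonneg _) hz.le, div_eq_inv_mul, ← Real.rpow_neg hz.le]
    rw [lintegral_mul_const _ (by fun_prop), lintegral_ofReal_add_norm_rpow μ (by positivity),
      ENNReal.ofReal_rpow_of_pos (by positivity), hsplit, ENNReal.ofReal_mul (by positivity)]
    ring
  rw [lintegral_congr_ae ((EuclideanSpace.ae_apply_ne i 0).mono hinner),
    lintegral_const_mul _ (by fun_prop)]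

end AddHaar

theorem gaussian_tail_integral_bound
    (k k' : ℕ) (hk' : 0 < k') (hk'k : k' ≤ k)
    (𝔪 : ℝ) (h𝔪₁ : (k' : ℝ) - 1 < 𝔪) (h𝔪₂ : 𝔪 < (k' : ℝ)) :
    ∃ c : ℝ, 0 < c ∧ ∀ z : ℝ, 0 < z →
      (∫⁻ η' : EuclideanSpace ℝ (Fin k'),
        ∫⁻ η'' : EuclideanSpace ℝ (Fin (k - k')),
          ENNReal.ofReal (|η' ⟨0, hk'⟩| / z + ‖η''‖) ^ (𝔪 - (k : ℝ)) *
            ENNReal.ofReal (Real.exp (-‖η'‖ ^ 2 / 2)))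
        ≤ ENNReal.ofReal (c * z ^ ((k' : ℝ) - 𝔪)) := by
  set i₀ : Fin k' := ⟨0, hk'⟩
  have hdim : (finrank ℝ (EuclideanSpace ℝ (Fin (k - k'))) : ℝ) = k - k' := by
    rw [finrank_euclideanSpace_fin, Nat.cast_sub hk'k]
  set C := ∫⁻ ζ : EuclideanSpace ℝ (Fin (k - k')), ENNReal.ofReal (1 + ‖ζ‖) ^ (𝔪 - k)
  set J := ∫⁻ η' : EuclideanSpace ℝ (Fin k'),
    ENNReal.ofReal (|η' i₀| ^ (𝔪 - k')) * ENNReal.ofReal (Real.exp (-‖η'‖ ^ 2 / 2))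
  have hC : C < ∞ := by
    convert finite_integral_one_add_norm (μ := volume) (r := k - 𝔪) (by rw [hdim]; linarith)
      using 3 with ζ
    rw [ENNReal.ofReal_rpow_of_pos (by positivity), neg_sub]
  have hJ : J < ∞ := by
    convert (EuclideanSpace.integrable_abs_apply_rpow_mul_exp_neg_mul_norm_sq i₀ (b := 1 / 2)
      (s := 𝔪 - k') (by norm_num) (by linarith)).lintegral_lt_top using 3 with η'
    rw [← ENNReal.ofReal_mul (by positivity)]
    ring_nf
  obtain ⟨c, hc, hCJ⟩ : ∃ c : ℝ, 0 < c ∧ C * J ≤ ENNReal.ofReal c :=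
    ⟨_, by positivity, (ENNReal.le_ofReal_iff_toReal_le (ENNReal.mul_ne_top hC.ne hJ.ne)
      (by positivity)).2 (le_add_of_nonneg_right zero_le_one)⟩
  refine ⟨c, hc, fun z hz => ?_⟩
  calc _ = ENNReal.ofReal (z ^ ((k' : ℝ) - 𝔪)) * (C * J) := by
        rw [lintegral_lintegral_ofReal_abs_div_add_norm_rpow_mul volume i₀ (by fun_prop) hz,
          hdim, show -(𝔪 - k + (k - k')) = (k' : ℝ) - 𝔪 by ring,
          show 𝔪 - k + (k - k') = 𝔪 - k' by ring, mul_assoc]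
    _ ≤ ENNReal.ofReal (z ^ ((k' : ℝ) - 𝔪)) * ENNReal.ofReal c := by gcongr
    _ = ENNReal.ofReal (c * z ^ ((k' : ℝ) - 𝔪)) := by
        rw [← ENNReal.ofReal_mul (by positivity), mul_comm]
end

section
/- Let V₁, …, Vₙ be vector subspaces of a common finite-dimensional vector space, s ≥ 0 a real number, and x = (x₁, …, xₙ) ∈ ℝⁿ with x_i ≥ 0 for all i and Σ_{i∈I} x_i + dim(Σ_{i∈I^c} V_i) ≥ s for every I ⊆ {1,…,n}. For I ⊆ {1,…,n} write V_I = Σ_{i∈I} V_i (with V_∅ the zero subspace). If I, J ⊆ {1,…,n} satisfy Σ_{i∈I} x_i + dim V_{I^c} = s and Σ_{i∈J} x_i + dim V_{J^c} = s, then also Σ_{i∈I∪J} x_i + dim V_{(I∪J)^c} = s and Σ_{i∈I∩J} x_i + dim V_{(I∩J)^c} = s. -/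
open Module

theorem equality_set_closed_under_union_inter
    {W : Type*} [AddCommGroup W] [Module ℝ W] [FiniteDimensional ℝ W]
    {n : ℕ} (V : Fin n → Submodule ℝ W)
    (s : ℝ) (hs : 0 ≤ s) (x : Fin n → ℝ) (hx : ∀ i, 0 ≤ x i)
    (hcond : ∀ I : Finset (Fin n),
      s ≤ ∑ i ∈ I, x i + (finrank ℝ (⨆ i ∈ Iᶜ, V i : Submodule ℝ W) : ℝ))
    (I J : Finset (Fin n))
    (hI : ∑ i ∈ I, x i + (finrank ℝ (⨆ i ∈ Iᶜ, V i : Submodule ℝ W) : ℝ) = s)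
    (hJ : ∑ i ∈ J, x i + (finrank ℝ (⨆ i ∈ Jᶜ, V i : Submodule ℝ W) : ℝ) = s) :
    ∑ i ∈ I ∪ J, x i + (finrank ℝ (⨆ i ∈ (I ∪ J)ᶜ, V i : Submodule ℝ W) : ℝ) = s ∧
    ∑ i ∈ I ∩ J, x i + (finrank ℝ (⨆ i ∈ (I ∩ J)ᶜ, V i : Submodule ℝ W) : ℝ) = s := by
  have hsum : ∑ i ∈ I ∪ J, x i + ∑ i ∈ I ∩ J, x i = ∑ i ∈ I, x i + ∑ i ∈ J, x i :=
    Finset.sum_union_inter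
  -- (I ∪ J)ᶜ = Iᶜ ∩ Jᶜ, (I ∩ J)ᶜ = Iᶜ ∪ Jᶜ
  have hU : ((I ∪ J)ᶜ : Finset (Fin n)) = Iᶜ ∩ Jᶜ := Finset.compl_union I J
  have hInt : ((I ∩ J)ᶜ : Finset (Fin n)) = Iᶜ ∪ Jᶜ := Finset.compl_inter I J
  set A : Submodule ℝ W := ⨆ i ∈ Iᶜ, V i with hA
  set B : Submodule ℝ W := ⨆ i ∈ Jᶜ, V i with hB
  have hsupU : (⨆ i ∈ (I ∩ J)ᶜ, V i : Submodule ℝ W) = A ⊔ B := by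
    rw [hInt]
    simp only [Finset.mem_union, iSup_or, iSup_sup_eq, hA, hB]
  have hle : (⨆ i ∈ (I ∪ J)ᶜ, V i : Submodule ℝ W) ≤ A ⊓ B := by
    rw [hU]
    refine le_inf ?_ ?_ <;>
      exact iSup₂_le fun i hi => le_iSup₂ (f := fun i _ => V i) i
        (by simp at hi ⊢ <;> tauto)
  have key : finrank ℝ (⨆ i ∈ (I ∪ J)ᶜ, V i : Submodule ℝ W)
      + finrank ℝ (⨆ i ∈ (I ∩ J)ᶜ, V i : Submodule ℝ W)
      ≤ finrank ℝ A + finrank ℝ B := by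
    rw [hsupU]
    calc finrank ℝ (⨆ i ∈ (I ∪ J)ᶜ, V i : Submodule ℝ W) + finrank ℝ (A ⊔ B : Submodule ℝ W)
        ≤ finrank ℝ (A ⊓ B : Submodule ℝ W) + finrank ℝ (A ⊔ B : Submodule ℝ W) := by
          gcongr
          exact Submodule.finrank_mono hle
      _ = finrank ℝ A + finrank ℝ B := by
          rw [add_comm]; exact Submodule.finrank_sup_add_finrank_inf_eq A B
  have h1 := hcond (I ∪ J)
  have h2 := hcond (I ∩ J)
  have key' : (finrank ℝ (⨆ i ∈ (I ∪ J)ᶜ, V i : Submodule ℝ W) : ℝ)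
      + (finrank ℝ (⨆ i ∈ (I ∩ J)ᶜ, V i : Submodule ℝ W) : ℝ)
      ≤ (finrank ℝ A : ℝ) + (finrank ℝ B : ℝ) := by exact_mod_cast key
  constructor <;> linarith
end
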